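/- arXiv:1408.5376 — 2 statements merged into one kernel-verified Lean document; each statement's English description precedes it below -/
import Mathlib

section
/- Let κ, τ : ℝ → ℝ be functions with κ twice differentiable and τ differentiable, satisfying κ' = −2κτ, τ' = κ² − τ², and the biharmonic equation κ'' + 3τ·κ' = 4κ³. Then κ is identically zero. -/
/-! Differentiating `κ' = -2κτ` and substituting `τ' = κ² - τ²` gives `κ'' = 6κτ² - 2κ³`, so the
biharmonic equation collapses to `-2κ³ = 4κ³`. -/

theorem deriv_deriv_eq_of_structure_eqs {κ τ : ℝ → ℝ} {t : ℝ}
    (hκ : DifferentiableAt ℝ κ t) (hτ : DifferentiableAt ℝ τ t)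
    (h1 : ∀ s, deriv κ s = -2 * κ s * τ s) (h2 : deriv τ t = κ t ^ 2 - τ t ^ 2) :
    deriv (deriv κ) t = 6 * κ t * τ t ^ 2 - 2 * κ t ^ 3 := by
  have hd : HasDerivAt (fun s => -2 * κ s * τ s)
      (-2 * deriv κ t * τ t + -2 * κ t * deriv τ t) t :=
    (hκ.hasDerivAt.const_mul (-2)).mul hτ.hasDerivAt
  rw [funext h1, hd.deriv, h1 t, h2]
  ring

theorem stmt_7_general (κ τ : ℝ → ℝ)
    (hκ : Differentiable ℝ κ)
    (hτ : Differentiable ℝ τ)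
    (h1 : ∀ t, deriv κ t = -2 * κ t * τ t)
    (h2 : ∀ t, deriv τ t = (κ t) ^ 2 - (τ t) ^ 2)
    (hbih : ∀ t, deriv (deriv κ) t + 3 * τ t * deriv κ t = 4 * (κ t) ^ 3) :
    ∀ t, κ t = 0 := by
  intro t
  have hbih_t := hbih t
  rw [deriv_deriv_eq_of_structure_eqs (hκ t) (hτ t) h1 (h2 t), h1 t] at hbih_t
  have hκ_cube : κ t ^ 3 = 0 := by linear_combination (-1 / 6 : ℝ) * hbih_t
  exact eq_zero_of_pow_eq_zero hκ_cube

theorem stmt_7 (κ τ : ℝ → ℝ)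
    (hκ : Differentiable ℝ κ) (hκ' : Differentiable ℝ (deriv κ))
    (hτ : Differentiable ℝ τ)
    (h1 : ∀ t, deriv κ t = -2 * κ t * τ t)
    (h2 : ∀ t, deriv τ t = (κ t) ^ 2 - (τ t) ^ 2)
    (hbih : ∀ t, deriv (deriv κ) t + 3 * τ t * deriv κ t = 4 * (κ t) ^ 3) :
    ∀ t, κ t = 0 :=
  stmt_7_general κ τ hκ hτ h1 h2 hbih
end

section
/- Let a be a real number and let k4, ξ, η : ℝ → ℝ be differentiable functions with k4 nowhere vanishing, satisfying: k4' = ((2a+4)/(2a+3))·η·k4 (assuming 2a+3 ≠ 0), k4' = ((1−a)/a)·ξ·k4 (assuming a ≠ 0), η' = η² + (−2a−3)·k4², ξ' = −ξ² − a·k4², and ξ·η = (−2a−3)·a·k4². If all these equations hold on a nonempty open interval, then a = −1. -/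
theorem stmt_11 (a : ℝ) (k4 ξ η : ℝ → ℝ)
    (hk4 : Differentiable ℝ k4) (hξ : Differentiable ℝ ξ) (hη : Differentiable ℝ η)
    (hk4ne : ∀ t, k4 t ≠ 0)
    (ha0 : a ≠ 0) (ha3 : 2 * a + 3 ≠ 0)
    (I : Set ℝ) (hI : IsOpen I) (hIne : I.Nonempty)
    (h1 : ∀ t ∈ I, deriv k4 t = ((2 * a + 4) / (2 * a + 3)) * η t * k4 t)
    (h2 : ∀ t ∈ I, deriv k4 t = ((1 - a) / a) * ξ t * k4 t)
    (h3 : ∀ t ∈ I, deriv η t = (η t) ^ 2 + (-2 * a - 3) * (k4 t) ^ 2)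
    (h4 : ∀ t ∈ I, deriv ξ t = -(ξ t) ^ 2 - a * (k4 t) ^ 2)
    (h5 : ∀ t ∈ I, ξ t * η t = (-2 * a - 3) * a * (k4 t) ^ 2) :
    a = -1 := by
  obtain ⟨t, ht⟩ := hIne
  have hk : k4 t ≠ 0 := hk4ne t
  have hk2 : k4 t ^ 2 ≠ 0 := pow_ne_zero _ hk
  have hξη := h5 t ht
  have hA' : (-2 * a - 3) ≠ 0 := by intro h; apply ha3; linarith
  -- edge case a = -2
  by_cases ha2 : a = -2
  · exfalso
    subst ha2
    have hK : deriv k4 t = 0 := by rw [h1 t ht]; norm_num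
    have e2 := h2 t ht
    rw [hK] at e2
    have hxk : ξ t * k4 t = 0 := by nlinarith [e2]
    have hx : ξ t = 0 := (mul_eq_zero.mp hxk).resolve_right hk
    rw [hx, zero_mul] at hξη
    have : k4 t ^ 2 = 0 := by nlinarith [hξη]
    exact hk2 this
  -- edge case a = 1
  by_cases ha1 : a = 1
  · exfalso
    subst ha1
    have hK : deriv k4 t = 0 := by rw [h2 t ht]; norm_num
    have e1 := h1 t ht
    rw [hK] at e1
    have hek : η t * k4 t = 0 := by nlinarith [e1]
    have he : η t = 0 := (mul_eq_zero.mp hek).resolve_right hk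
    rw [he, mul_zero] at hξη
    have : k4 t ^ 2 = 0 := by nlinarith [hξη]
    exact hk2 this
  have h24 : (2 * a + 4) ≠ 0 := by intro h; apply ha2; linarith
  -- η never zero at t
  have hη0 : η t ≠ 0 := by
    intro h
    rw [h, mul_zero] at hξη
    exact (mul_ne_zero (mul_ne_zero hA' ha0) hk2) hξη.symm
  -- key identity on all of I : (2a+4) η² = (2a+3)² (a-1) k4²
  have hF : ∀ s ∈ I, (2 * a + 4) * η s ^ 2 - (2 * a + 3) ^ 2 * (a - 1) * k4 s ^ 2 = 0 := by
    intro s hs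
    have h12 : ((2 * a + 4) / (2 * a + 3)) * η s = ((1 - a) / a) * ξ s :=
      mul_right_cancel₀ (hk4ne s) (((h1 s hs).symm.trans (h2 s hs)))
    have hrel : (2 * a + 4) * a * η s = (2 * a + 3) * (1 - a) * ξ s := by
      field_simp at h12
      linear_combination h12
    have h6 : a * ((2 * a + 4) * η s ^ 2) = a * ((2 * a + 3) ^ 2 * (a - 1) * k4 s ^ 2) := by
      linear_combination η s * hrel + (2 * a + 3) * (1 - a) * (h5 s hs)
    have := mul_left_cancel₀ ha0 h6
    linarith
  -- its derivative at t vanishes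
  have hFt : (fun s => (2 * a + 4) * η s ^ 2 - (2 * a + 3) ^ 2 * (a - 1) * k4 s ^ 2)
      =ᶠ[nhds t] (fun _ => (0 : ℝ)) := by
    filter_upwards [hI.mem_nhds ht] with s hs
    exact hF s hs
  have hd : HasDerivAt (fun s => (2 * a + 4) * η s ^ 2 - (2 * a + 3) ^ 2 * (a - 1) * k4 s ^ 2)
      ((2 * a + 4) * ((2 : ℕ) * η t ^ 1 * deriv η t)
        - (2 * a + 3) ^ 2 * (a - 1) * ((2 : ℕ) * k4 t ^ 1 * deriv k4 t)) t :=
    ((((hη t).hasDerivAt).pow 2).const_mul _).sub ((((hk4 t).hasDerivAt).pow 2).const_mul _)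
  have h0 : (2 * a + 4) * ((2 : ℕ) * η t ^ 1 * deriv η t)
      - (2 * a + 3) ^ 2 * (a - 1) * ((2 : ℕ) * k4 t ^ 1 * deriv k4 t) = 0 := by
    rw [← hd.deriv, hFt.deriv_eq]
    simp
  rw [h3 t ht] at h0
  have hk1' : (2 * a + 3) * deriv k4 t = (2 * a + 4) * (η t * k4 t) := by
    rw [h1 t ht]; field_simp
  -- derive η² = (2a+3) a k4²
  have hE2' : ((2 * a + 3) * (2 * η t * (2 * a + 4))) * (η t ^ 2)
      = ((2 * a + 3) * (2 * η t * (2 * a + 4))) * ((2 * a + 3) * a * k4 t ^ 2) := by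
    push_cast at h0
    linear_combination (2 * a + 3) * h0 + 2 * (2 * a + 3) ^ 2 * (a - 1) * k4 t * hk1'
  have hE2 : η t ^ 2 = (2 * a + 3) * a * k4 t ^ 2 :=
    mul_left_cancel₀ (mul_ne_zero ha3 (mul_ne_zero (mul_ne_zero two_ne_zero hη0) h24)) hE2'
  have hE1 := hF t ht
  have hfin : (2 * a + 3) * k4 t ^ 2 * (3 * a + 3) = 0 := by
    linear_combination hE1 - (2 * a + 4) * hE2
  rcases mul_eq_zero.mp hfin with h | h
  · exact absurd h (mul_ne_zero ha3 hk2)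
  · linarith
end
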